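/- arXiv:1911.12525 — 2 statements merged into one kernel-verified Lean document; each statement's English description precedes it below -/
import Mathlib

section
/- Assume k ≤ n − 3 and let λ : {1,…,n} × {0,1} → F be injective. Let R ⊆ {3,…,n} be a set with |R| = k + 1. If c and c' are codewords of C(n,k,2,3,λ) such that c(i,1,a) + c(i,2,a(1,a_1⊕1)) = c'(i,1,a) + c'(i,2,a(1,a_1⊕1)) for every i ∈ R and every a ∈ {0,1}^n, then: (1) c(1,b,a) = c'(1,b,a) for every b ∈ {1,2} and every a ∈ {0,1}^n, and (2) c(2,1,a) + c(2,2,a(1,a_1⊕1)) = c'(2,1,a) + c'(2,2,a(1,a_1⊕1)) for every a ∈ {0,1}^n. -/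
/-- The code `C(n,k,s,m,λ)`: an array `c : {1,…,n} × {1,…,m} × {0,…,s-1}^n → F`
(node index `i : Fin n`, block index `b ∈ {1,…,m}` as a natural number,
`a : Fin n → Fin s`) satisfying the parity-check equations
`∑_{i=1}^n λ(i,a_i)^t · c(i,b,a) = 0` for all `t ∈ {0,…,n-k-1}`,
`b ∈ {1,…,m}` and `a ∈ {0,…,s-1}^n`. -/
def IsCodeword {F : Type*} [Field F] {n : ℕ} (k s m : ℕ)
    (lam : Fin n → Fin s → F) (c : Fin n → ℕ → (Fin n → Fin s) → F) : Prop :=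
  ∀ t < n - k, ∀ b ∈ Finset.Icc 1 m, ∀ a : Fin n → Fin s,
    ∑ i, lam i (a i) ^ t * c i b a = 0

/-! The difference `d = c - c'` is a codeword. Adding the parity checks of block 1 at `a` and of
block 2 at `a' = a(1, a₁ ⊕ 1)` gives a single system `∑ₚ λ(p)ᵗ w(p) = 0`, `t < n - k`, over the
pairs `p = (i, u)`. As `a` and `a'` differ only at node 1, the point `(i, aᵢ)` carries
`d(i,1,a) + d(i,2,a')`, which vanishes for `i ∈ R`, and `w` is supported on the
`n - |R| + 1 = n - k` points `(i, aᵢ)`, `i ∉ R`, and `(1, a₁ ⊕ 1)`. These have distinct `λ`-values,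
so the Vandermonde matrix is invertible and `w = 0`; reading `w` at `(1, a₁)`, `(1, a₁ ⊕ 1)` and
`(2, a₂)` gives the claims. -/

open Finset Function

section Vandermonde

variable {R ι : Type*} [CommRing R] [IsDomain R] [Fintype ι] {x v : ι → R}

theorem eq_zero_of_forall_lt_card_sum_pow_mul_eq_zero (hx : Injective x)
    (h : ∀ t < Fintype.card ι, ∑ i, x i ^ t * v i = 0) : v = 0 := by
  let e := Fintype.equivFin ι
  have hve : v ∘ e.symm = 0 :=
    Matrix.eq_zero_of_forall_pow_sum_mul_pow_eq_zero (hx.comp e.symm.injective) fun t => by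
      rw [← h t t.isLt, ← e.symm.sum_comp]
      simp only [comp_apply, mul_comm]
  funext i
  simpa using congrFun hve (e i)

theorem eq_zero_of_forall_sum_pow_mul_eq_zero_of_support_subset (hx : Injective x)
    (S : Finset ι) (hv : ∀ i ∉ S, v i = 0) {N : ℕ} (hSN : #S ≤ N)
    (h : ∀ t < N, ∑ i, x i ^ t * v i = 0) : v = 0 := by
  have hsum : ∀ t, ∑ i, x i ^ t * v i = ∑ i : S, x i ^ t * v i := fun t => by
    rw [sum_coe_sort S fun i => x i ^ t * v i]
    exact (sum_subset (subset_univ S) fun i _ hi => by rw [hv i hi, mul_zero]).symm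
  have hS : (fun i : S => v i) = 0 :=
    eq_zero_of_forall_lt_card_sum_pow_mul_eq_zero (x := fun i : S => x i)
      (hx.comp Subtype.val_injective) fun t ht => by
        rw [Fintype.card_coe] at ht
        rw [← hsum]
        exact h t (ht.trans_le hSN)
  funext i
  by_cases hi : i ∈ S
  · exact congrFun hS ⟨i, hi⟩
  · exact hv i hi

end Vandermonde

theorem Fintype.sum_prod_ite_eq_graph {ι κ M : Type*} [Fintype ι] [Fintype κ] [DecidableEq κ]
    [AddCommMonoid M] (a : ι → κ) (f : ι × κ → M) :
    ∑ p : ι × κ, (if p.2 = a p.1 then f p else 0) = ∑ i, f (i, a i) := by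
  simp only [Fintype.sum_prod_type, Fintype.sum_ite_eq']

theorem update_update_add_one {ι : Type*} [DecidableEq ι] (a : ι → Fin 2) (i : ι) :
    update (update a i (a i + 1)) i (update a i (a i + 1) i + 1) = a := by
  rw [update_self, update_idem, (by decide : ∀ u : Fin 2, u + 1 + 1 = u), update_eq_self]

namespace IsCodeword

variable {F : Type*} [Field F] {n k s m : ℕ} {lam : Fin n → Fin s → F}

theorem sub {c c' : Fin n → ℕ → (Fin n → Fin s) → F} (hc : IsCodeword k s m lam c)
    (hc' : IsCodeword k s m lam c') : IsCodeword k s m lam (c - c') := fun t ht b hb a => by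
  simp only [Pi.sub_apply, mul_sub, sum_sub_distrib, hc t ht b hb a, hc' t ht b hb a, sub_zero]

theorem eq_zero_of_add_update_eq_zero_on
    (hlam : Injective fun p : Fin n × Fin s => lam p.1 p.2)
    {d : Fin n → ℕ → (Fin n → Fin s) → F} (hd : IsCodeword k s m lam d)
    {b₁ b₂ : ℕ} (hb₁ : b₁ ∈ Icc 1 m) (hb₂ : b₂ ∈ Icc 1 m)
    {R : Finset (Fin n)} (hRcard : k + 1 ≤ #R) {i₀ : Fin n} (hi₀ : i₀ ∉ R)
    (a : Fin n → Fin s) {u : Fin s} (hu : u ≠ a i₀)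
    (hR : ∀ i ∈ R, d i b₁ a + d i b₂ (update a i₀ u) = 0) :
    d i₀ b₁ a = 0 ∧ d i₀ b₂ (update a i₀ u) = 0 ∧
      ∀ i ≠ i₀, d i b₁ a + d i b₂ (update a i₀ u) = 0 := by
  set a' := update a i₀ u
  have ha' : ∀ i ≠ i₀, a' i = a i := fun i hi => update_of_ne hi _ _
  set w : Fin n × Fin s → F := fun p =>
    (if p.2 = a p.1 then d p.1 b₁ a else 0) + (if p.2 = a' p.1 then d p.1 b₂ a' else 0)
  set S : Finset (Fin n × Fin s) := insert (i₀, u) (Rᶜ.image fun i => (i, a i))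
  have hcheck : ∀ t < n - k, ∑ p, lam p.1 p.2 ^ t * w p = 0 := by
    intro t ht
    simp only [w, mul_add, mul_ite, mul_zero, sum_add_distrib, Fintype.sum_prod_ite_eq_graph]
    rw [hd t ht b₁ hb₁ a, hd t ht b₂ hb₂ a', add_zero]
  have hsupp : ∀ p ∉ S, w p = 0 := by
    rintro ⟨i, v⟩ hp
    simp only [S, mem_insert, mem_image, mem_compl, Prod.mk.injEq, not_or, not_exists,
      not_and] at hp
    by_cases hi : i ∈ R
    · have hai : a' i = a i := ha' i (ne_of_mem_of_not_mem hi hi₀)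
      by_cases hv : v = a i <;> simp [w, hai, hv, hR i hi]
    · have hv : v ≠ a i := fun h => hp.2 i hi rfl h.symm
      have hv' : v ≠ a' i := by
        by_cases hii : i = i₀
        · subst hii; simpa [a'] using hp.1
        · rwa [ha' i hii]
      simp [w, hv, hv']
  have hcard : #S ≤ n - k :=
    calc #S ≤ #(Rᶜ.image fun i => (i, a i)) + 1 := card_insert_le _ _
      _ ≤ #Rᶜ + 1 := by gcongr; exact card_image_le
      _ = n - #R + 1 := by rw [card_compl, Fintype.card_fin]
      _ ≤ n - k := by have := card_lt_univ_of_notMem hi₀; rw [Fintype.card_fin] at this; omega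
  have hw := congrFun (eq_zero_of_forall_sum_pow_mul_eq_zero_of_support_subset hlam S hsupp
    hcard hcheck)
  refine ⟨?_, ?_, fun i hi => ?_⟩
  · simpa [w, a', hu.symm] using hw (i₀, a i₀)
  · simpa [w, a', hu] using hw (i₀, u)
  · simpa [w, ha' i hi] using hw (i, a i)

end IsCodeword

theorem stmt_3_general {F : Type*} [Field F] (n k : ℕ)
    (lam : Fin n → Fin 2 → F)
    (hlam : Function.Injective fun p : Fin n × Fin 2 => lam p.1 p.2)
    (i1 i2 : Fin n) (hi1 : (i1 : ℕ) = 0) (hi2 : (i2 : ℕ) = 1)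
    (R : Finset (Fin n)) (hR : ∀ i ∈ R, 2 ≤ (i : ℕ)) (hRcard : R.card = k + 1)
    (c c' : Fin n → ℕ → (Fin n → Fin 2) → F)
    (hc : IsCodeword k 2 3 lam c) (hc' : IsCodeword k 2 3 lam c')
    (heq : ∀ i ∈ R, ∀ a : Fin n → Fin 2,
      c i 1 a + c i 2 (Function.update a i1 (a i1 + 1))
        = c' i 1 a + c' i 2 (Function.update a i1 (a i1 + 1))) :
    (∀ b ∈ Finset.Icc 1 2, ∀ a : Fin n → Fin 2, c i1 b a = c' i1 b a) ∧
    (∀ a : Fin n → Fin 2,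
      c i2 1 a + c i2 2 (Function.update a i1 (a i1 + 1))
        = c' i2 1 a + c' i2 2 (Function.update a i1 (a i1 + 1))) := by
  have hi1R : i1 ∉ R := fun h => by have := hR i1 h; omega
  have hi21 : i2 ≠ i1 := fun h => by rw [h, hi1] at hi2; omega
  have hflip : ∀ u : Fin 2, u + 1 ≠ u := by decide
  have hrepair (a : Fin n → Fin 2) :=
    (hc.sub hc').eq_zero_of_add_update_eq_zero_on hlam (b₁ := 1) (b₂ := 2) (by simp) (by simp)
      hRcard.ge hi1R a (hflip (a i1)) fun i hi => by
        simp only [Pi.sub_apply]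
        rw [sub_add_sub_comm, heq i hi a, sub_self]
  refine ⟨fun b hb a => ?_, fun a => ?_⟩
  · obtain rfl | rfl : b = 1 ∨ b = 2 := by rw [Finset.mem_Icc] at hb; omega
    · exact sub_eq_zero.mp (hrepair a).1
    · have h := (hrepair (update a i1 (a i1 + 1))).2.1
      rw [update_update_add_one] at h
      exact sub_eq_zero.mp h
  · have h := (hrepair a).2.2 i2 hi21
    simp only [Pi.sub_apply] at h
    linear_combination h

/-- first-round recovery at node 1 in `C(n,k,2,3,λ)`.  Nodes 1 and 2
of the paper are `i1, i2 : Fin n` with indices `0, 1`; the helper set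
`R ⊆ {3,…,n}` consists of nodes with index `≥ 2`, and `|R| = k+1`.  If the
downloaded sums `c(i,1,a) + c(i,2,a(1,a₁⊕1))` for `i ∈ R` agree for two
codewords, then (1) the coordinates `(1,b,a)`, `b ∈ {1,2}`, agree, and (2) the
sums at node 2 agree. -/
theorem stmt_3 {F : Type*} [Field F] (n k : ℕ) (hk : 1 ≤ k) (hkn : k + 3 ≤ n)
    (lam : Fin n → Fin 2 → F)
    (hlam : Function.Injective fun p : Fin n × Fin 2 => lam p.1 p.2)
    (i1 i2 : Fin n) (hi1 : (i1 : ℕ) = 0) (hi2 : (i2 : ℕ) = 1)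
    (R : Finset (Fin n)) (hR : ∀ i ∈ R, 2 ≤ (i : ℕ)) (hRcard : R.card = k + 1)
    (c c' : Fin n → ℕ → (Fin n → Fin 2) → F)
    (hc : IsCodeword k 2 3 lam c) (hc' : IsCodeword k 2 3 lam c')
    (heq : ∀ i ∈ R, ∀ a : Fin n → Fin 2,
      c i 1 a + c i 2 (Function.update a i1 (a i1 + 1))
        = c' i 1 a + c' i 2 (Function.update a i1 (a i1 + 1))) :
    (∀ b ∈ Finset.Icc 1 2, ∀ a : Fin n → Fin 2, c i1 b a = c' i1 b a) ∧
    (∀ a : Fin n → Fin 2,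
      c i2 1 a + c i2 2 (Function.update a i1 (a i1 + 1))
        = c' i2 1 a + c' i2 2 (Function.update a i1 (a i1 + 1))) :=
  stmt_3_general n k lam hlam i1 i2 hi1 hi2 R hR hRcard c c' hc hc' heq
end

section
/- Let s ≥ 1, set d := k + s − 1, assume d ≤ n − 2, and let λ : {1,…,n} × {0,…,s−1} → F be injective. Let 𝓕, 𝓡 ⊆ {1,…,n} be disjoint sets with |𝓕| = 2 and |𝓡| = d. Then there exist: first-round download functions φ_{u,j} : N → M for each u ∈ 𝓕 and j ∈ 𝓡; exchange functions ψ_{u,v} : (𝓡 → M) → M for each ordered pair of distinct u, v ∈ 𝓕; and recovery functions ρ_u : (𝓡 → M) × ((𝓕∖{u}) → M) → N for each u ∈ 𝓕; such that for every codeword c of C(n,k,s,s+1,λ) and every u ∈ 𝓕, ρ_u( (j ↦ φ_{u,j}(c_j)), (v ↦ ψ_{v,u}(j ↦ φ_{v,j}(c_j))) ) = c_u, where c_i ∈ N denotes the i-th node (b,a) ↦ c(i,b,a). Since each of the 2d first-round messages and each of the 2 exchange messages consists of s^n symbols of F, the total repair bandwidth is 2(d+1)·s^n symbols, which meets the cooperative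 cut-set bound |𝓕|(|𝓡|+|𝓕|−1)·l / (|𝓕|+|𝓡|−k) with equality for node size l = (s+1)·s^n = (d+2−k)·s^n. -/
/-!
Helper `j` sends to failed node `u` (partner `v`, mixing block `μ`), for every block `b ≠ μ`
and every index `a` with the coordinate `a u` summed out, the fibre sum of block `b` plus
`lam v (a v) ^ (b - 1)` times the fibre sum of block `μ` (coefficient `0` at `b = ν`, the
partner's mixing block). Summing the parity checks of such a combination over the fibre of
`a u` gives `n - k` checks on `s + (n - d - 1) ≤ n - k` unknowns with distinct evaluation
points, so the `d` downloads fix every block of `u` in terms of block `μ`, and they also fix the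
message that `u` itself would send to `v` as a helper. The failed nodes exchange these messages;
as `{μ, ν} = {1, s + 1}`, the exchanged message gives a Vandermonde system in the points
`lam v ξ` that pins down block `μ`. Everything is linear, so the repair maps are obtained by
factoring through the downloads over the codewords (`Function.extend`).
-/

open Finset Function

theorem eq_zero_of_forall_sum_pow_mul_eq_zero {ι R : Type*} [Fintype ι] [CommRing R] [IsDomain R]
    {r x : ι → R} (hr : Injective r) (h : ∀ t < Fintype.card ι, ∑ i, r i ^ t * x i = 0) :
    x = 0 := by
  set e := Fintype.equivFin ι
  have hx := Matrix.eq_zero_of_forall_pow_sum_mul_pow_eq_zero (f := r ∘ e.symm)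
    (v := x ∘ e.symm) (hr.comp e.symm.injective) fun t => by
      rw [← h t t.isLt, ← e.symm.sum_comp]
      simp only [comp_apply, mul_comm]
  ext i
  simpa using congrFun hx (e i)

section Parity

variable {F : Type*} [Field F] {n k s : ℕ} {lam : Fin n → Fin s → F}
  {y : Fin n → (Fin n → Fin s) → F}

theorem IsCodeword.parity_add_mul {m : ℕ} {c : Fin n → ℕ → (Fin n → Fin s) → F}
    (hc : IsCodeword k s m lam c) {b b' : ℕ} (hb : b ∈ Icc 1 m) (hb' : b' ∈ Icc 1 m)
    (κ : F) :
    ∀ t < n - k, ∀ a, ∑ i, lam i (a i) ^ t * (c i b a + κ * c i b' a) = 0 := by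
  intro t ht a
  simp only [mul_add, mul_left_comm _ κ, sum_add_distrib, ← mul_sum, hc t ht b hb a,
    hc t ht b' hb' a, mul_zero, add_zero]

theorem IsCodeword.sub_s9 {m : ℕ} {c c' : Fin n → ℕ → (Fin n → Fin s) → F}
    (hc : IsCodeword k s m lam c) (hc' : IsCodeword k s m lam c') :
    IsCodeword k s m lam (c - c') := by
  intro t ht b hb a
  simp only [Pi.sub_apply, mul_sub, sum_sub_distrib, hc t ht b hb a, hc' t ht b hb a, sub_zero]

theorem sum_fiber_parity (hy : ∀ t < n - k, ∀ a, ∑ i, lam i (a i) ^ t * y i a = 0)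
    (u : Fin n) (a : Fin n → Fin s) {t : ℕ} (ht : t < n - k) :
    ∑ ξ, lam u ξ ^ t * y u (update a u ξ)
      + ∑ i ∈ univ.erase u, lam i (a i) ^ t * ∑ ξ, y i (update a u ξ) = 0 := by
  calc _ = ∑ i, ∑ ξ, lam i (update a u ξ i) ^ t * y i (update a u ξ) := by
        rw [← add_sum_erase _ _ (mem_univ u)]
        congr 1
        · simp only [update_self]
        · refine sum_congr rfl fun i hi => ?_
          simp only [update_of_ne (ne_of_mem_erase hi), mul_sum]
    _ = 0 := by
        rw [sum_comm]
        exact sum_eq_zero fun ξ _ => hy t ht _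

theorem fiber_eq_zero_of_sum_fiber_eq_zero
    (hlam : Injective fun p : Fin n × Fin s => lam p.1 p.2)
    {Rs : Finset (Fin n)} (hR : k + s ≤ #Rs + 1) {u : Fin n} (hu : u ∉ Rs)
    (hy : ∀ t < n - k, ∀ a, ∑ i, lam i (a i) ^ t * y i a = 0) {a : Fin n → Fin s}
    (hRs : ∀ j ∈ Rs, ∑ ξ, y j (update a u ξ) = 0) :
    (∀ ξ, y u (update a u ξ) = 0) ∧
      ∀ w ∉ Rs, w ≠ u → ∑ ξ, y w (update a u ξ) = 0 := by
  set O := Rsᶜ.erase u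
  have hO : ∀ {w}, w ∈ O ↔ w ∉ Rs ∧ w ≠ u := by simp [O, and_comm]
  let r : Fin s ⊕ O → F := (fun p : Fin n × Fin s => lam p.1 p.2) ∘
    Sum.elim (fun ξ => (u, ξ)) (fun w => (w.1, a w.1))
  have hr : Injective r := hlam.comp <| Injective.sumElim (fun _ _ h => (Prod.ext_iff.1 h).2)
    (fun _ _ h => Subtype.ext (Prod.ext_iff.1 h).1)
    fun _ w h => (hO.1 w.2).2 (Prod.ext_iff.1 h).1.symm
  let x : Fin s ⊕ O → F :=
    Sum.elim (fun ξ => y u (update a u ξ)) (fun w => ∑ ξ, y w (update a u ξ))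
  have hcard : Fintype.card (Fin s ⊕ O) ≤ n - k := by
    have : #O = n - #Rs - 1 := by
      rw [card_erase_of_mem (mem_compl.2 hu), card_compl, Fintype.card_fin]
    have : #Rs < n := (card_lt_univ_of_notMem hu).trans_eq (by simp)
    simp only [Fintype.card_sum, Fintype.card_fin, Fintype.card_coe]
    omega
  have hx : x = 0 := by
    refine eq_zero_of_forall_sum_pow_mul_eq_zero hr fun t ht => ?_
    rw [Fintype.sum_sum_type, ← sum_fiber_parity hy u a (ht.trans_le hcard)]
    congr 1
    refine (sum_coe_sort O fun w => lam w (a w) ^ t * ∑ ξ, y w (update a u ξ)).trans ?_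
    refine sum_subset (erase_subset_erase _ (subset_univ _)) fun j hj hjO => ?_
    have hj : j ∈ Rs := by simpa [hO, ne_of_mem_erase hj] using hjO
    rw [hRs j hj, mul_zero]
  exact ⟨fun ξ => congrFun hx (.inl ξ),
    fun w hw hwu => congrFun hx (.inr ⟨w, hO.2 ⟨hw, hwu⟩⟩)⟩

end Parity

section RepairMessage

variable {F : Type*} [Field F] {n k s : ℕ} {lam : Fin n → Fin s → F} {u v : Fin n}
  {μ ν : ℕ}

/-- For `μ ∈ {1, s+1}`, `otherBlock s μ` enumerates the blocks `{1,…,s+1} \ {μ}`. -/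
def otherBlock (s μ : ℕ) (x : Fin s) : ℕ := if (x : ℕ) + 1 < μ then x + 1 else x + 2

def mixCoeff (lam : Fin n → Fin s → F) (v : Fin n) (ν b : ℕ) (t : Fin s) : F :=
  if b = ν then 0 else lam v t ^ (b - 1)

def mixedFiberSum (lam : Fin n → Fin s → F) (u v : Fin n) (μ ν : ℕ)
    (g : ℕ → (Fin n → Fin s) → F) (b : ℕ) (a : Fin n → Fin s) : F :=
  ∑ ξ, (g b (update a u ξ) + mixCoeff lam v ν b (a v) * g μ (update a u ξ))

/-- The message that a helper node with content `g` sends to the failed node `u` (partner `v`,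
mixing block `μ`): the coordinate `a u` of the index selects a block `b ≠ μ`, so its `s ^ n`
symbols are the values of `mixedFiberSum lam u v μ ν g b` for all such `b` and all values of the
remaining coordinates. -/
def repairMsg (lam : Fin n → Fin s → F) (u v : Fin n) (μ ν : ℕ)
    (g : ℕ → (Fin n → Fin s) → F) (a : Fin n → Fin s) : F :=
  mixedFiberSum lam u v μ ν g (otherBlock s μ (a u)) a

theorem otherBlock_mem (hμ : μ = 1 ∨ μ = s + 1) (x : Fin s) :
    otherBlock s μ x ∈ Icc 1 (s + 1) ∧ otherBlock s μ x ≠ μ := by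
  have := x.isLt
  rw [mem_Icc]
  rcases hμ with rfl | rfl <;> unfold otherBlock <;> split_ifs <;> omega

theorem exists_otherBlock_eq (hμ : μ = 1 ∨ μ = s + 1) {b : ℕ} (hb : b ∈ Icc 1 (s + 1))
    (hbμ : b ≠ μ) : ∃ x, otherBlock s μ x = b := by
  rw [mem_Icc] at hb
  rcases hμ with rfl | rfl
  · exact ⟨⟨b - 2, by omega⟩, by simp only [otherBlock]; split_ifs <;> omega⟩
  · exact ⟨⟨b - 1, by omega⟩, by simp only [otherBlock]; split_ifs <;> omega⟩

theorem mixedFiberSum_update_self (hvu : v ≠ u) (g : ℕ → (Fin n → Fin s) → F) (b : ℕ)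
    (a : Fin n → Fin s) (x : Fin s) :
    mixedFiberSum lam u v μ ν g b (update a u x) = mixedFiberSum lam u v μ ν g b a := by
  simp only [mixedFiberSum, update_idem, update_of_ne hvu]

theorem mixedFiberSum_eq_zero_of_repairMsg_eq_zero (hvu : v ≠ u) (hμ : μ = 1 ∨ μ = s + 1)
    {g : ℕ → (Fin n → Fin s) → F} (hg : repairMsg lam u v μ ν g = 0) {b : ℕ}
    (hb : b ∈ Icc 1 (s + 1)) (hbμ : b ≠ μ) (a : Fin n → Fin s) :
    mixedFiberSum lam u v μ ν g b a = 0 := by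
  obtain ⟨x, rfl⟩ := exists_otherBlock_eq hμ hb hbμ
  rw [← mixedFiberSum_update_self hvu g _ a x]
  simpa [repairMsg] using congrFun hg (update a u x)

theorem repairMsg_sub (g g' : ℕ → (Fin n → Fin s) → F) :
    repairMsg lam u v μ ν (g - g') = repairMsg lam u v μ ν g - repairMsg lam u v μ ν g' := by
  funext a
  simp only [repairMsg, mixedFiberSum, Pi.sub_apply, ← sum_sub_distrib]
  exact sum_congr rfl fun _ _ => by ring

end RepairMessage

section PairRepair

variable {F : Type*} [Field F] {n k s : ℕ} {lam : Fin n → Fin s → F} {Rs : Finset (Fin n)}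
  {u v : Fin n} {μ ν : ℕ} {c c' : Fin n → ℕ → (Fin n → Fin s) → F}

theorem mixedFiberSum_eq_zero_of_downloads_eq_zero
    (hlam : Injective fun p : Fin n × Fin s => lam p.1 p.2) (hR : k + s ≤ #Rs + 1)
    (hu : u ∉ Rs) (hv : v ∉ Rs) (huv : u ≠ v) (hμ : μ = 1 ∨ μ = s + 1)
    (hc : IsCodeword k s (s + 1) lam c) (hD : ∀ j ∈ Rs, repairMsg lam u v μ ν (c j) = 0)
    {b : ℕ} (hb : b ∈ Icc 1 (s + 1)) (hbμ : b ≠ μ) (a : Fin n → Fin s) :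
    c u b a + mixCoeff lam v ν b (a v) * c u μ a = 0 ∧
      mixedFiberSum lam u v μ ν (c v) b a = 0 := by
  have hμ' : μ ∈ Icc 1 (s + 1) := by rcases hμ with rfl | rfl <;> simp
  obtain ⟨hfiber, hrest⟩ := fiber_eq_zero_of_sum_fiber_eq_zero hlam hR hu
    (hc.parity_add_mul hb hμ' (mixCoeff lam v ν b (a v))) (a := a)
    fun j hj => mixedFiberSum_eq_zero_of_repairMsg_eq_zero huv.symm hμ (hD j hj) hb hbμ a
  exact ⟨by simpa using hfiber (a u), hrest v hv huv.symm⟩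

/-- Block `ν` of node `u` vanishes since its mixing coefficient is `0`. The exchange message then
yields the plain fibre sums over coordinate `v` of the blocks `b ≠ ν`; expressed through block
`μ`, they form a Vandermonde system in the points `lam v ξ` with exponents `0,…,s-1`. -/
theorem eq_zero_of_downloads_eq_zero
    (hlam : Injective fun p : Fin n × Fin s => lam p.1 p.2) (hR : k + s ≤ #Rs + 1)
    (hu : u ∉ Rs) (hv : v ∉ Rs) (huv : u ≠ v) (hμ : μ = 1 ∨ μ = s + 1)
    (hν : ν = 1 ∨ ν = s + 1) (hμν : μ ≠ ν) (hc : IsCodeword k s (s + 1) lam c)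
    (hD : ∀ j ∈ Rs, repairMsg lam u v μ ν (c j) = 0)
    (hX : repairMsg lam v u ν μ (c u) = 0) :
    ∀ b ∈ Icc 1 (s + 1), c u b = 0 := by
  have hμ' : μ ∈ Icc 1 (s + 1) := by rcases hμ with rfl | rfl <;> simp
  have hν' : ν ∈ Icc 1 (s + 1) := by rcases hν with rfl | rfl <;> simp
  have hcu : ∀ b ∈ Icc 1 (s + 1), b ≠ μ → ∀ a,
      c u b a = -(mixCoeff lam v ν b (a v) * c u μ a) := fun b hb hbμ a =>
    eq_neg_of_add_eq_zero_left
      (mixedFiberSum_eq_zero_of_downloads_eq_zero hlam hR hu hv huv hμ hc hD hb hbμ a).1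
  have hν0 : c u ν = 0 := funext fun a => by simp [hcu ν hν' hμν.symm a, mixCoeff]
  have hsum : ∀ b ∈ Icc 1 (s + 1), b ≠ ν → ∀ a, ∑ ξ, c u b (update a v ξ) = 0 :=
    fun b hb hbν a => by
      simpa [mixedFiberSum, hν0] using
        mixedFiberSum_eq_zero_of_repairMsg_eq_zero huv hν hX hb hbν a
  have hμ0 : c u μ = 0 := by
    funext a
    have hvand := eq_zero_of_forall_sum_pow_mul_eq_zero (r := lam v)
      (x := fun ξ => c u μ (update a v ξ))
      (fun ξ ξ' h => congrArg Prod.snd (@hlam (v, ξ) (v, ξ') h)) fun t ht => ?_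
    · simpa using congrFun hvand (a v)
    rcases t with _ | t
    · simpa using hsum μ hμ' hμν a
    · rw [Fintype.card_fin] at ht
      have hb : t + 2 ∈ Icc 1 (s + 1) := by rw [mem_Icc]; omega
      have hbμ : t + 2 ≠ μ := by rcases hμ with rfl | rfl <;> omega
      have hbν : t + 2 ≠ ν := by rcases hν with rfl | rfl <;> omega
      rw [← neg_eq_zero, ← sum_neg_distrib, ← hsum (t + 2) hb hbν a]
      refine sum_congr rfl fun ξ _ => ?_
      simp [hcu (t + 2) hb hbμ, mixCoeff, hbν]
  intro b hb
  by_cases hbμ : b = μ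
  · rw [hbμ, hμ0]
  · funext a
    simp [hcu b hb hbμ a, hμ0]

theorem repairMsg_partner_eq_of_downloads_eq
    (hlam : Injective fun p : Fin n × Fin s => lam p.1 p.2) (hR : k + s ≤ #Rs + 1)
    (hu : u ∉ Rs) (hv : v ∉ Rs) (huv : u ≠ v) (hν : ν = 1 ∨ ν = s + 1)
    (hc : IsCodeword k s (s + 1) lam c) (hc' : IsCodeword k s (s + 1) lam c')
    (hD : ∀ j ∈ Rs, repairMsg lam v u ν μ (c j) = repairMsg lam v u ν μ (c' j)) :
    repairMsg lam v u ν μ (c u) = repairMsg lam v u ν μ (c' u) := by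
  rw [← sub_eq_zero, ← repairMsg_sub]
  funext a
  obtain ⟨hb, hbν⟩ := otherBlock_mem hν (a v)
  exact (mixedFiberSum_eq_zero_of_downloads_eq_zero hlam hR hv hu huv.symm hν (hc.sub_s9 hc')
    (fun j hj => by rw [Pi.sub_apply, repairMsg_sub, hD j hj, sub_self]) hb hbν a).2

theorem eq_of_downloads_eq
    (hlam : Injective fun p : Fin n × Fin s => lam p.1 p.2) (hR : k + s ≤ #Rs + 1)
    (hu : u ∉ Rs) (hv : v ∉ Rs) (huv : u ≠ v) (hμ : μ = 1 ∨ μ = s + 1)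
    (hν : ν = 1 ∨ ν = s + 1) (hμν : μ ≠ ν)
    (hc : IsCodeword k s (s + 1) lam c) (hc' : IsCodeword k s (s + 1) lam c')
    (hD : ∀ j ∈ Rs, repairMsg lam u v μ ν (c j) = repairMsg lam u v μ ν (c' j))
    (hX : repairMsg lam v u ν μ (c u) = repairMsg lam v u ν μ (c' u)) :
    ∀ b ∈ Icc 1 (s + 1), c u b = c' u b := fun b hb =>
  sub_eq_zero.1 <| eq_zero_of_downloads_eq_zero hlam hR hu hv huv hμ hν hμν (hc.sub_s9 hc')
    (fun j hj => by rw [Pi.sub_apply, repairMsg_sub, hD j hj, sub_self])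
    (by rw [Pi.sub_apply, repairMsg_sub, hX, sub_self]) b hb

end PairRepair

section Partner

variable {n : ℕ} {u₀ u₁ u : Fin n}

def partner (u₀ u₁ w : Fin n) : Fin n := if w = u₀ then u₁ else u₀

def mixBlock (s : ℕ) (u₀ w : Fin n) : ℕ := if w = u₀ then s + 1 else 1

theorem mixBlock_eq (s : ℕ) (u₀ w : Fin n) :
    mixBlock s u₀ w = 1 ∨ mixBlock s u₀ w = s + 1 := by
  unfold mixBlock
  split_ifs <;> simp

theorem partner_spec (s : ℕ) [NeZero s] {Fs : Finset (Fin n)} (hne : u₀ ≠ u₁)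
    (hFs : Fs = {u₀, u₁}) (hu : u ∈ Fs) :
    Fs.erase u = {partner u₀ u₁ u} ∧ partner u₀ u₁ u ≠ u ∧
      partner u₀ u₁ (partner u₀ u₁ u) = u ∧
      mixBlock s u₀ u ≠ mixBlock s u₀ (partner u₀ u₁ u) := by
  have hs := NeZero.ne s
  subst hFs
  rcases mem_insert.1 hu with rfl | hu
  · simp [partner, mixBlock, hne, hne.symm, hs]
  · rw [mem_singleton.1 hu]
    simp [partner, mixBlock, hne, hne.symm, pair_comm u₀ u₁, hs]

end Partner

section Scheme

variable {F : Type*} [Field F] {n k s : ℕ} [NeZero s] {lam : Fin n → Fin s → F}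
  {Fs Rs : Finset (Fin n)} {u₀ u₁ u : Fin n}

def download (lam : Fin n → Fin s → F) (u₀ u₁ w : Fin n) :
    (ℕ → (Fin n → Fin s) → F) → (Fin n → Fin s) → F :=
  repairMsg lam w (partner u₀ u₁ w) (mixBlock s u₀ w) (mixBlock s u₀ (partner u₀ u₁ w))

theorem factorsThrough_exchange (hlam : Injective fun p : Fin n × Fin s => lam p.1 p.2)
    (hR : k + s ≤ #Rs + 1) (hdisj : Disjoint Fs Rs) (hne : u₀ ≠ u₁)
    (hFs : Fs = {u₀, u₁}) (hu : u ∈ Fs) :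
    FactorsThrough (fun c : {c // IsCodeword k s (s + 1) lam c} =>
        download lam u₀ u₁ (partner u₀ u₁ u) (c.1 u))
      fun c => fun j : Rs => download lam u₀ u₁ (partner u₀ u₁ u) (c.1 j) := by
  obtain ⟨herase, hvu, hvv, -⟩ := partner_spec s hne hFs hu
  intro c c' h
  simp only [download, hvv] at h ⊢
  exact repairMsg_partner_eq_of_downloads_eq hlam hR (disjoint_left.1 hdisj hu)
    (disjoint_left.1 hdisj (mem_of_mem_erase (herase ▸ mem_singleton_self _))) hvu.symm
    (mixBlock_eq s u₀ _) c.2 c'.2 fun j hj => congrFun h ⟨j, hj⟩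

theorem factorsThrough_recovery (hlam : Injective fun p : Fin n × Fin s => lam p.1 p.2)
    (hR : k + s ≤ #Rs + 1) (hdisj : Disjoint Fs Rs) (hne : u₀ ≠ u₁)
    (hFs : Fs = {u₀, u₁}) (hu : u ∈ Fs) :
    FactorsThrough (fun c : {c // IsCodeword k s (s + 1) lam c} =>
        Set.indicator (Icc 1 (s + 1) : Set ℕ) (c.1 u))
      fun c => (fun j : Rs => download lam u₀ u₁ u (c.1 j),
        fun w : Fs.erase u => download lam u₀ u₁ w (c.1 u)) := by
  obtain ⟨herase, hvu, hvv, hμν⟩ := partner_spec s hne hFs hu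
  have hv : partner u₀ u₁ u ∈ Fs.erase u := herase ▸ mem_singleton_self _
  intro c c' h
  have hX := congrFun (Prod.ext_iff.1 h).2 ⟨_, hv⟩
  simp only [download, hvv] at hX
  exact Set.indicator_congr fun b hb => eq_of_downloads_eq hlam hR (disjoint_left.1 hdisj hu)
    (disjoint_left.1 hdisj (mem_of_mem_erase hv)) hvu.symm (mixBlock_eq s u₀ u)
    (mixBlock_eq s u₀ _) hμν c.2 c'.2 (fun j hj => congrFun (Prod.ext_iff.1 h).1 ⟨j, hj⟩) hX
    b (by simpa using hb)

end Scheme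

theorem stmt_9_general {F : Type*} [Field F] (n k s : ℕ) [NeZero s]
    (lam : Fin n → Fin s → F)
    (hlam : Function.Injective fun p : Fin n × Fin s => lam p.1 p.2)
    (Fs Rs : Finset (Fin n)) (hdisj : Disjoint Fs Rs)
    (hFcard : Fs.card = 2) (hRcard : Rs.card = k + s - 1) :
    ∃ (φ : Fin n → Fin n → (ℕ → (Fin n → Fin s) → F) → ((Fin n → Fin s) → F))
      (ψ : Fin n → Fin n → ({j // j ∈ Rs} → (Fin n → Fin s) → F) → ((Fin n → Fin s) → F))
      (ρ : (u : Fin n) → ({j // j ∈ Rs} → (Fin n → Fin s) → F) →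
            ({v // v ∈ Fs.erase u} → (Fin n → Fin s) → F) → (ℕ → (Fin n → Fin s) → F)),
      ∀ c : Fin n → ℕ → (Fin n → Fin s) → F, IsCodeword k s (s + 1) lam c →
        ∀ u ∈ Fs, ∀ b ∈ Finset.Icc 1 (s + 1), ∀ a : Fin n → Fin s,
          ρ u (fun j => φ u j.1 (c j.1))
              (fun v => ψ v.1 u (fun j => φ v.1 j.1 (c j.1))) b a
            = c u b a := by
  obtain ⟨u₀, u₁, hne, hFs⟩ := card_eq_two.1 hFcard
  have hR : k + s ≤ #Rs + 1 := by omega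
  let D := download lam u₀ u₁
  let Code := {c // IsCodeword k s (s + 1) lam c}
  refine ⟨fun w _ => D w,
    fun v u => extend (fun c : Code => fun j : Rs => D v (c.1 j)) (fun c => D v (c.1 u)) 0,
    fun u f e => extend
      (fun c : Code => (fun j : Rs => D u (c.1 j), fun w : Fs.erase u => D w (c.1 u)))
      (fun c => Set.indicator (Icc 1 (s + 1) : Set ℕ) (c.1 u)) 0 (f, e), ?_⟩
  intro c hc u hu b hb a
  have hψ : (fun w : Fs.erase u => extend (fun c : Code => fun j : Rs => D w (c.1 j))
      (fun c => D w (c.1 u)) 0 (fun j : Rs => D w (c j))) = fun w : Fs.erase u => D w (c u) := by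
    funext ⟨w, hw⟩
    obtain rfl : w = partner u₀ u₁ u := mem_singleton.1 ((partner_spec s hne hFs hu).1 ▸ hw)
    exact (factorsThrough_exchange hlam hR hdisj hne hFs hu).extend_apply 0 ⟨c, hc⟩
  have hρ := congrFun (congrFun
    ((factorsThrough_recovery hlam hR hdisj hne hFs hu).extend_apply 0 ⟨c, hc⟩) b) a
  rw [Set.indicator_of_mem (by simpa using hb)] at hρ
  rwa [hψ]

/-- `C(n,k,s,s+1,λ)` is a `(2,d)`-MSR code under the cooperative
model, where `s ≥ 1` and `d := k+s-1 ≤ n-2` (expressed by `k + s + 1 ≤ n`).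
For any two failed nodes `Fs` and any `d` helper nodes `Rs` there exist
first-round download functions `φ u j` (one message, i.e. one element of
`M = (Fin n → Fin s) → F ≅ F^(s^n)`, sent from helper `j` to failed node `u`),
exchange functions `ψ u v` (one message of `M` computed by `u` from its
first-round downloads and sent to the other failed node `v`), and recovery
functions `ρ u`, such that every failed node recovers all of its coordinates
`(b,a)`, `b ∈ {1,…,s+1}`.  The total bandwidth, `2d + 2` messages of `s^n`
field symbols each, meets the cooperative cut-set bound with equality. -/
theorem stmt_9 {F : Type*} [Field F] (n k s : ℕ) [NeZero s]
    (hk : 1 ≤ k) (hkn : k + s + 1 ≤ n)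
    (lam : Fin n → Fin s → F)
    (hlam : Function.Injective fun p : Fin n × Fin s => lam p.1 p.2)
    (Fs Rs : Finset (Fin n)) (hdisj : Disjoint Fs Rs)
    (hFcard : Fs.card = 2) (hRcard : Rs.card = k + s - 1) :
    ∃ (φ : Fin n → Fin n → (ℕ → (Fin n → Fin s) → F) → ((Fin n → Fin s) → F))
      (ψ : Fin n → Fin n → ({j // j ∈ Rs} → (Fin n → Fin s) → F) → ((Fin n → Fin s) → F))
      (ρ : (u : Fin n) → ({j // j ∈ Rs} → (Fin n → Fin s) → F) →
            ({v // v ∈ Fs.erase u} → (Fin n → Fin s) → F) → (ℕ → (Fin n → Fin s) → F)),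
      ∀ c : Fin n → ℕ → (Fin n → Fin s) → F, IsCodeword k s (s + 1) lam c →
        ∀ u ∈ Fs, ∀ b ∈ Finset.Icc 1 (s + 1), ∀ a : Fin n → Fin s,
          ρ u (fun j => φ u j.1 (c j.1))
              (fun v => ψ v.1 u (fun j => φ v.1 j.1 (c j.1))) b a
            = c u b a :=
  stmt_9_general n k s lam hlam Fs Rs hdisj hFcard hRcard
end
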